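/- arXiv:1710.04967 — 3 statements merged into one kernel-verified Lean document; each statement's English description precedes it below -/
import Mathlib

section
/- The q-binomial theorem: for complex a, z, q with |z| < 1 and |q| < 1, the series ∑_{k=0}^∞ ((a;q)_k / (q;q)_k) z^k converges to (az; q)_∞ / (z; q)_∞. -/
/-- The finite q-Pochhammer symbol `(a;q)_n = ∏_{j=0}^{n-1} (1 - a q^j)`. -/
noncomputable def qPoch (a q : ℂ) (n : ℕ) : ℂ :=
  ∏ j ∈ Finset.range n, (1 - a * q ^ j)

/-- The infinite q-Pochhammer symbol `(a;q)_∞ = ∏_{j=0}^∞ (1 - a q^j)`. -/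
noncomputable def qPochInf (a q : ℂ) : ℂ :=
  ∏' j : ℕ, (1 - a * q ^ j)

/-!
Write `c_k = (a;q)_k / (q;q)_k` and `F(w) = ∑ c_k w^k`. The recurrence
`c_{k+1} (1 - q^{k+1}) = c_k (1 - a q^k)` gives radius of convergence at least `1` (ratio test) and
the functional equation `(1 - w) F(w) = (1 - a w) F(w q)`. Iterating it,
`F(z) (z;q)_n = (az;q)_n F(z q^n)`, and `F(z q^n) → F(0) = 1` by dominated convergence, so in the
limit `F(z) (z;q)_∞ = (az;q)_∞`, where `(z;q)_∞ ≠ 0`.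
-/

open Filter Topology

section Pochhammer

variable {w q : ℂ}

lemma norm_mul_pow_le (w : ℂ) (hq : ‖q‖ ≤ 1) (n : ℕ) : ‖w * q ^ n‖ ≤ ‖w‖ := by
  rw [norm_mul, norm_pow]
  exact mul_le_of_le_one_right (norm_nonneg w) (pow_le_one₀ (norm_nonneg q) hq)

lemma norm_mul_pow_lt_one (hw : ‖w‖ < 1) (hq : ‖q‖ ≤ 1) (n : ℕ) : ‖w * q ^ n‖ < 1 :=
  (norm_mul_pow_le w hq n).trans_lt hw

lemma one_sub_mul_pow_ne_zero (hw : ‖w‖ < 1) (hq : ‖q‖ ≤ 1) (n : ℕ) : 1 - w * q ^ n ≠ 0 :=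
  sub_ne_zero.2 fun h => by simpa [← h] using norm_mul_pow_lt_one hw hq n

lemma qPoch_zero (w q : ℂ) : qPoch w q 0 = 1 := Finset.prod_range_zero _

lemma qPoch_succ (w q : ℂ) (n : ℕ) : qPoch w q (n + 1) = qPoch w q n * (1 - w * q ^ n) :=
  Finset.prod_range_succ _ _

lemma summable_norm_mul_pow (w : ℂ) (hq : ‖q‖ < 1) : Summable fun j : ℕ => ‖w * q ^ j‖ := by
  simpa [norm_mul, norm_pow] using
    (summable_geometric_of_lt_one (norm_nonneg q) hq).mul_left ‖w‖

lemma multipliable_one_sub_mul_pow (w : ℂ) (hq : ‖q‖ < 1) :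
    Multipliable fun j : ℕ => 1 - w * q ^ j := by
  simpa [sub_eq_add_neg] using
    multipliable_one_add_of_summable (f := fun j : ℕ => -(w * q ^ j))
      (by simpa using summable_norm_mul_pow w hq)

lemma tendsto_qPoch_qPochInf (w : ℂ) (hq : ‖q‖ < 1) :
    Tendsto (qPoch w q) atTop (𝓝 (qPochInf w q)) :=
  (multipliable_one_sub_mul_pow w hq).hasProd.tendsto_prod_nat

lemma qPochInf_ne_zero (hw : ‖w‖ < 1) (hq : ‖q‖ < 1) : qPochInf w q ≠ 0 := by
  simpa [qPochInf, sub_eq_add_neg] using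
    tprod_one_add_ne_zero_of_summable (f := fun j : ℕ => -(w * q ^ j))
      (by simpa [← sub_eq_add_neg] using one_sub_mul_pow_ne_zero hw hq.le)
      (by simpa using summable_norm_mul_pow w hq)

end Pochhammer

noncomputable def qBinomialCoeff (a q : ℂ) (k : ℕ) : ℂ :=
  qPoch a q k / qPoch q q k

noncomputable def qBinomialSeries (a q w : ℂ) : ℂ :=
  ∑' k : ℕ, qBinomialCoeff a q k * w ^ k

section Series

variable {a q w : ℂ}

lemma qBinomialCoeff_zero (a q : ℂ) : qBinomialCoeff a q 0 = 1 := by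
  simp [qBinomialCoeff, qPoch_zero]

lemma qBinomialCoeff_succ (a q : ℂ) (k : ℕ) :
    qBinomialCoeff a q (k + 1) = qBinomialCoeff a q k * ((1 - a * q ^ k) / (1 - q * q ^ k)) := by
  rw [qBinomialCoeff, qBinomialCoeff, qPoch_succ, qPoch_succ, mul_div_mul_comm]

lemma qBinomialCoeff_succ_mul (a : ℂ) (hq : ‖q‖ < 1) (k : ℕ) :
    qBinomialCoeff a q (k + 1) * (1 - q * q ^ k) = qBinomialCoeff a q k * (1 - a * q ^ k) := by
  rw [qBinomialCoeff_succ, mul_assoc, div_mul_cancel₀ _ (one_sub_mul_pow_ne_zero hq hq.le k)]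

lemma tendsto_qBinomialCoeff_ratio (a : ℂ) (hq : ‖q‖ < 1) :
    Tendsto (fun k : ℕ => (1 - a * q ^ k) / (1 - q * q ^ k)) atTop (𝓝 1) := by
  have hpow := tendsto_pow_atTop_nhds_zero_of_norm_lt_one hq
  have hlim : Tendsto (fun k : ℕ => (1 - a * q ^ k) / (1 - q * q ^ k)) atTop
      (𝓝 ((1 - a * 0) / (1 - q * 0))) :=
    (tendsto_const_nhds.sub (hpow.const_mul a)).div (tendsto_const_nhds.sub (hpow.const_mul q))
      (by simp)
  simpa using hlim

lemma summable_norm_qBinomialCoeff_mul_pow (a : ℂ) (hq : ‖q‖ < 1) (hw : ‖w‖ < 1) :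
    Summable fun k : ℕ => ‖qBinomialCoeff a q k * w ^ k‖ := by
  obtain ⟨r, hwr, hr⟩ := exists_between hw
  have hratio : ∀ᶠ k : ℕ in atTop, ‖(1 - a * q ^ k) / (1 - q * q ^ k) * w‖ < r := by
    refine Tendsto.eventually_lt_const ?_ ((tendsto_qBinomialCoeff_ratio a hq).mul_const w).norm
    simpa using hwr
  refine summable_of_ratio_norm_eventually_le hr (hratio.mono fun k hk => ?_)
  have hstep : qBinomialCoeff a q (k + 1) * w ^ (k + 1) =
      (1 - a * q ^ k) / (1 - q * q ^ k) * w * (qBinomialCoeff a q k * w ^ k) := by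
    rw [qBinomialCoeff_succ, pow_succ]; ring
  rw [norm_norm, norm_norm, hstep, norm_mul]
  exact mul_le_mul_of_nonneg_right hk.le (norm_nonneg _)

lemma summable_qBinomialCoeff_mul_pow (a : ℂ) (hq : ‖q‖ < 1) (hw : ‖w‖ < 1) :
    Summable fun k : ℕ => qBinomialCoeff a q k * w ^ k :=
  (summable_norm_qBinomialCoeff_mul_pow a hq hw).of_norm

lemma one_sub_mul_qBinomialSeries (a : ℂ) (hq : ‖q‖ < 1) (hw : ‖w‖ < 1) :
    (1 - w) * qBinomialSeries a q w = (1 - a * w) * qBinomialSeries a q (w * q) := by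
  set c := qBinomialCoeff a q
  have hw' : ‖w * q‖ < 1 := by simpa using norm_mul_pow_lt_one hw hq.le 1
  have hs := summable_qBinomialCoeff_mul_pow a hq hw
  have hs' := summable_qBinomialCoeff_mul_pow a hq hw'
  have hshift : ∀ k, c (k + 1) * w ^ (k + 1) - c (k + 1) * (w * q) ^ (k + 1) =
      w * (c k * w ^ k) - a * w * (c k * (w * q) ^ k) := fun k => by
    linear_combination w ^ (k + 1) * qBinomialCoeff_succ_mul a hq k
  have hdiff : qBinomialSeries a q w - qBinomialSeries a q (w * q) =
      w * qBinomialSeries a q w - a * w * qBinomialSeries a q (w * q) :=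
    calc qBinomialSeries a q w - qBinomialSeries a q (w * q)
        = ∑' k, (c k * w ^ k - c k * (w * q) ^ k) := (hs.tsum_sub hs').symm
      _ = ∑' k, (c (k + 1) * w ^ (k + 1) - c (k + 1) * (w * q) ^ (k + 1)) := by
        rw [(hs.sub hs').tsum_eq_zero_add]; simp [c]
      _ = ∑' k, (w * (c k * w ^ k) - a * w * (c k * (w * q) ^ k)) := tsum_congr hshift
      _ = w * qBinomialSeries a q w - a * w * qBinomialSeries a q (w * q) := by
        rw [(hs.mul_left w).tsum_sub (hs'.mul_left _), tsum_mul_left, tsum_mul_left]; rfl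
  linear_combination hdiff

lemma qBinomialSeries_mul_qPoch (a : ℂ) (hq : ‖q‖ < 1) (hw : ‖w‖ < 1) (n : ℕ) :
    qBinomialSeries a q w * qPoch w q n = qPoch (a * w) q n * qBinomialSeries a q (w * q ^ n) := by
  induction n with
  | zero => simp [qPoch_zero]
  | succ n ih =>
    have hfun := one_sub_mul_qBinomialSeries a hq (norm_mul_pow_lt_one hw hq.le n)
    rw [mul_assoc, ← pow_succ] at hfun
    rw [qPoch_succ, qPoch_succ]
    linear_combination (1 - w * q ^ n) * ih + qPoch (a * w) q n * hfun

lemma tendsto_qBinomialSeries_mul_pow (a : ℂ) (hq : ‖q‖ < 1) (hw : ‖w‖ < 1) :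
    Tendsto (fun n : ℕ => qBinomialSeries a q (w * q ^ n)) atTop (𝓝 1) := by
  have hpow : Tendsto (fun n : ℕ => w * q ^ n) atTop (𝓝 0) := by
    simpa using (tendsto_pow_atTop_nhds_zero_of_norm_lt_one hq).const_mul w
  have hlim := tendsto_tsum_of_dominated_convergence (summable_norm_qBinomialCoeff_mul_pow a hq hw)
    (fun k => (hpow.pow k).const_mul (qBinomialCoeff a q k))
    (Eventually.of_forall fun n k => by
      rw [norm_mul, norm_mul, norm_pow, norm_pow]
      gcongr
      exact norm_mul_pow_le w hq.le n)
  have hsum_zero : ∑' k, qBinomialCoeff a q k * (0 : ℂ) ^ k = 1 := by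
    rw [tsum_eq_single 0 fun k hk => by simp [hk]]; simp [qBinomialCoeff_zero]
  rw [hsum_zero] at hlim
  exact hlim

end Series

/-- The q-binomial theorem: for `|z| < 1` and `|q| < 1`,
`∑_{k=0}^∞ ((a;q)_k/(q;q)_k) z^k = (az;q)_∞/(z;q)_∞`. -/
theorem q_binomial_theorem (a z q : ℂ) (hz : ‖z‖ < 1)
    (hq : ‖q‖ < 1) :
    ∑' k : ℕ, (qPoch a q k / qPoch q q k) * z ^ k =
      qPochInf (a * z) q / qPochInf z q := by
  have hleft : Tendsto (fun n => qBinomialSeries a q z * qPoch z q n) atTop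
      (𝓝 (qBinomialSeries a q z * qPochInf z q)) :=
    (tendsto_qPoch_qPochInf z hq).const_mul _
  have hright : Tendsto (fun n => qPoch (a * z) q n * qBinomialSeries a q (z * q ^ n)) atTop
      (𝓝 (qPochInf (a * z) q * 1)) :=
    (tendsto_qPoch_qPochInf (a * z) hq).mul (tendsto_qBinomialSeries_mul_pow a hq hz)
  have hlim := tendsto_nhds_unique
    (hleft.congr (qBinomialSeries_mul_qPoch a hq hz)) hright
  rw [mul_one] at hlim
  exact (eq_div_iff (qPochInf_ne_zero hz hq)).2 hlim
end

section
/- The q-Cesàro polynomial g_n^{(s)}(z;q) := ((q^{s+1};q)_n / (q;q)_n) · ∑_{k=0}^n ((q^{-n};q)_k (q;q)_k / ((q^{-s-n};q)_k (q;q)_k)) z^k equals ∑_{k=0}^n [k+s choose s]_q (z q^s)^{n-k}, where [m choose r]_q = (q;q)_m / ((q;q)_r (q;q)_{m-r}) is the q-binomial coefficient. -/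
/-- The q-binomial coefficient `[m choose r]_q = (q;q)_m/((q;q)_r (q;q)_{m-r})`. -/
noncomputable def qBinom (q : ℂ) (m r : ℕ) : ℂ :=
  qPoch q q m / (qPoch q q r * qPoch q q (m - r))

open Finset

theorem qPoch_add (a q : ℂ) (m n : ℕ) :
    qPoch a q (m + n) = qPoch a q m * qPoch (a * q ^ m) q n := by
  rw [qPoch, prod_range_add]
  congr 1
  exact prod_congr rfl fun j _ => by ring

theorem qPoch_self_eq_mul_qPoch_pow {q : ℂ} {m k : ℕ} (hk : k ≤ m) :
    qPoch q q m = qPoch q q (m - k) * qPoch (q ^ (m - k + 1)) q k := by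
  rw [pow_succ', ← qPoch_add, Nat.sub_add_cancel hk]

theorem qPoch_zpow_neg {q : ℂ} (hq : q ≠ 0) (m : ℤ) (k : ℕ) :
    qPoch (q ^ (-m)) q k = (∏ j ∈ range k, -q ^ ((j : ℤ) - m)) * qPoch (q ^ (m - k + 1)) q k := by
  rw [qPoch, qPoch, ← prod_range_reflect (fun i => 1 - q ^ (m - k + 1) * q ^ i), ← prod_mul_distrib]
  refine prod_congr rfl fun j hj => ?_
  have hjk : ((k - 1 - j : ℕ) : ℤ) = k - 1 - j := by have := mem_range.1 hj; omega
  simp only [← zpow_natCast, hjk, ← zpow_add₀ hq, mul_sub, mul_one]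
  rw [neg_mul, ← zpow_add₀ hq, show (j : ℤ) - m + (m - k + 1 + (k - 1 - j)) = 0 by ring, zpow_zero,
    neg_add_eq_sub]
  ring

theorem qPoch_zpow_neg_mul_qPoch {q : ℂ} (hq : q ≠ 0) {m k : ℕ} (hk : k ≤ m) :
    qPoch (q ^ (-(m : ℤ))) q k * qPoch q q (m - k) =
      (∏ j ∈ range k, -q ^ ((j : ℤ) - m)) * qPoch q q m := by
  have hexp : (m : ℤ) - k + 1 = ((m - k + 1 : ℕ) : ℤ) := by omega
  rw [qPoch_zpow_neg hq, hexp, zpow_natCast, qPoch_self_eq_mul_qPoch_pow hk]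
  ring

theorem prod_neg_zpow_sub_add {q : ℂ} (hq : q ≠ 0) (m : ℤ) (s k : ℕ) :
    ∏ j ∈ range k, -q ^ ((j : ℤ) - m) = q ^ (s * k) * ∏ j ∈ range k, -q ^ ((j : ℤ) - (m + s)) := by
  rw [pow_mul, ← card_range k, ← prod_const, card_range, ← prod_mul_distrib]
  refine prod_congr rfl fun j _ => ?_
  rw [mul_neg, ← zpow_natCast, ← zpow_add₀ hq]
  ring_nf

theorem qCesaro_coeff {q : ℂ} (hq : q ≠ 0) (hden : ∀ k : ℕ, qPoch q q k ≠ 0) {s n k : ℕ}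
    (hk : k ≤ n) :
    qPoch (q ^ (s + 1)) q n / qPoch q q n *
        (qPoch (q ^ (-(n : ℤ))) q k / qPoch (q ^ (-(s + n : ℤ))) q k) =
      qBinom q (n - k + s) s * q ^ (s * k) := by
  have hA := eq_div_of_mul_eq (hden _) (qPoch_zpow_neg_mul_qPoch hq hk)
  have hB := eq_div_of_mul_eq (hden _) (qPoch_zpow_neg_mul_qPoch hq (m := n + s) (k := k) (by omega))
  have hP : qPoch q q (n + s) = qPoch q q s * qPoch (q ^ (s + 1)) q n := by
    rw [add_comm, qPoch_add, pow_succ']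
  have hC : ∏ j ∈ range k, -q ^ ((j : ℤ) - (n + s)) ≠ 0 :=
    prod_ne_zero_iff.2 fun j _ => neg_ne_zero.2 (zpow_ne_zero _ hq)
  push_cast at hB
  rw [add_comm (s : ℤ), hA, hB, prod_neg_zpow_sub_add hq n s k, hP, qBinom, Nat.add_sub_cancel,
    show n - k + s = n + s - k by omega]
  have hP0 : qPoch (q ^ (s + 1)) q n ≠ 0 := right_ne_zero_of_mul (hP ▸ hden _)
  have := hden n; have := hden s; have := hden (n - k); have := hden (n + s - k)
  field_simp

theorem qCesaro_eq_general (q z : ℂ) (hq0 : 0 < ‖q‖)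
    (s n : ℕ)
    (hden : ∀ k : ℕ, qPoch q q k ≠ 0) :
    (qPoch (q ^ (s + 1)) q n / qPoch q q n) *
        ∑ k ∈ Finset.range (n + 1),
          (qPoch (q ^ (-(n : ℤ))) q k * qPoch q q k /
            (qPoch (q ^ (-(s + n : ℤ))) q k * qPoch q q k)) * z ^ k =
      ∑ k ∈ Finset.range (n + 1), qBinom q (k + s) s * (z * q ^ s) ^ (n - k) := by
  have hq : q ≠ 0 := norm_pos_iff.1 hq0
  rw [← sum_range_reflect (fun k => qBinom q (k + s) s * (z * q ^ s) ^ (n - k)), mul_sum]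
  refine sum_congr rfl fun k hk => ?_
  have hkn : k ≤ n := Nat.lt_succ_iff.1 (mem_range.1 hk)
  rw [show n + 1 - 1 - k = n - k by omega, Nat.sub_sub_self hkn, mul_div_mul_right _ _ (hden k),
    ← mul_assoc, qCesaro_coeff hq hden hkn, mul_pow, ← pow_mul]
  ring

/-- The q-Cesàro polynomial, expressed as a basic hypergeometric sum, equals
`∑_{k=0}^n [k+s choose s]_q (z q^s)^{n-k}`. -/
theorem qCesaro_eq (q z : ℂ) (hq0 : 0 < ‖q‖) (hq1 : ‖q‖ < 1)
    (s n : ℕ)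
    (hden : ∀ k : ℕ, qPoch q q k ≠ 0)
    (hden' : ∀ k : ℕ, k ≤ n → qPoch (q ^ (-(s + n : ℤ))) q k ≠ 0) :
    (qPoch (q ^ (s + 1)) q n / qPoch q q n) *
        ∑ k ∈ Finset.range (n + 1),
          (qPoch (q ^ (-(n : ℤ))) q k * qPoch q q k /
            (qPoch (q ^ (-(s + n : ℤ))) q k * qPoch q q k)) * z ^ k =
      ∑ k ∈ Finset.range (n + 1), qBinom q (k + s) s * (z * q ^ s) ^ (n - k) :=
  qCesaro_eq_general q z hq0 s n hden
end

section
/- For natural number m and complex t with |t| < 1, the Bateman polynomials B_m(z) = ₃F₂(−m, m+1, (z+1)/2; 1, 1; 1) satisfy ∑_{n=0}^∞ B_m(−2n−1) t^n = (1/(1−t)) · P_m((1+t)/(1−t)), where P_m is the m-th Legendre polynomial. -/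
/-- The rising factorial (Pochhammer symbol) `(a)_k = a(a+1)⋯(a+k-1)`. -/
noncomputable def risingFactorial (a : ℂ) (k : ℕ) : ℂ :=
  ∏ i ∈ Finset.range k, (a + i)

/-- The Bateman polynomial `B_m` evaluated at `z = -2n-1`:
`B_m(−2n−1) = ∑_{k=0}^m (−m)_k (m+1)_k (−n)_k / (k!)³`. -/
noncomputable def batemanEval (m n : ℕ) : ℂ :=
  ∑ k ∈ Finset.range (m + 1),
    risingFactorial (-(m : ℂ)) k * risingFactorial ((m : ℂ) + 1) k *
      risingFactorial (-(n : ℂ)) k / ((k.factorial : ℂ)) ^ 3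

/-- The Legendre polynomial
`P_m(x) = 2^{-m} ∑_{k=0}^m (m choose k)² (x−1)^{m−k} (x+1)^k`. -/
noncomputable def legendreP (m : ℕ) (x : ℂ) : ℂ :=
  (1 / 2 ^ m) * ∑ k ∈ Finset.range (m + 1),
    ((m.choose k : ℂ)) ^ 2 * (x - 1) ^ (m - k) * (x + 1) ^ k
/-!
Expanding the Pochhammer symbols gives `B_m(−2n−1) = ∑_k C(m,k) C(m+k,k) C(n,k)`, and
`∑_n C(n,k) tⁿ = tᵏ / (1−t)^(k+1)`, so the left side is `(1−t)⁻¹ ∑_k C(m,k) C(m+k,k) uᵏ` with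
`u = t/(1−t)`. As `(1+t)/(1−t) = 1 + 2u`, what remains is the classical expansion
`P_m(1+2u) = ∑_k C(m,k) C(m+k,k) uᵏ`, which follows from the explicit formula for `P_m` by
Vandermonde's identity `C(m+j,m) = ∑_k C(m,k) C(j,m−k)`.
-/

open Finset
open scoped Nat

lemma risingFactorial_eq_eval_ascPochhammer (a : ℂ) (k : ℕ) :
    risingFactorial a k = (ascPochhammer ℂ k).eval a := by
  induction k with
  | zero => simp [risingFactorial]
  | succ k ih =>
    rw [risingFactorial, prod_range_succ, ← risingFactorial, ih, ascPochhammer_succ_right]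
    simp

lemma risingFactorial_neg_natCast (n k : ℕ) :
    risingFactorial (-(n : ℂ)) k = (-1) ^ k * (k ! * n.choose k : ℕ) := by
  rw [risingFactorial_eq_eval_ascPochhammer, ascPochhammer_eval_neg_eq_descPochhammer,
    descPochhammer_eval_eq_descFactorial, Nat.descFactorial_eq_factorial_mul_choose]

lemma risingFactorial_natCast_add_one (m k : ℕ) :
    risingFactorial ((m : ℂ) + 1) k = (k ! * (m + k).choose k : ℕ) := by
  rw [risingFactorial_eq_eval_ascPochhammer, ← Nat.cast_succ,
    ascPochhammer_nat_eq_natCast_ascFactorial, Nat.ascFactorial_eq_factorial_mul_choose]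

lemma batemanEval_eq_sum_choose (m n : ℕ) :
    batemanEval m n = ∑ k ∈ range (m + 1), (m.choose k * (m + k).choose k * n.choose k : ℂ) := by
  refine sum_congr rfl fun k _ => ?_
  rw [risingFactorial_neg_natCast, risingFactorial_natCast_add_one, risingFactorial_neg_natCast]
  have : (k ! : ℂ) ≠ 0 := Nat.cast_ne_zero.mpr k.factorial_ne_zero
  have sign : ((-1 : ℂ)) ^ k * (-1) ^ k = 1 := by rw [← mul_pow]; norm_num
  field_simp
  push_cast
  linear_combination (k ! : ℂ) ^ 3 * m.choose k * (m + k).choose k * n.choose k * sign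

lemma hasSum_choose_mul_pow {𝕜 : Type*} [NormedDivisionRing 𝕜] [CompleteSpace 𝕜] (k : ℕ)
    {t : 𝕜} (ht : ‖t‖ < 1) :
    HasSum (fun n : ℕ => (n.choose k : 𝕜) * t ^ n) (t ^ k / (1 - t) ^ (k + 1)) := by
  have shifted := (hasSum_choose_mul_geometric_of_norm_lt_one k ht).mul_left (t ^ k)
  refine (hasSum_nat_add_iff' k).mp ?_
  rw [sum_eq_zero fun i hi => by simp [Nat.choose_eq_zero_of_lt (mem_range.mp hi)], sub_zero]
  rw [mul_one_div] at shifted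
  refine shifted.congr_fun fun n => ?_
  rw [← mul_assoc, ← Nat.cast_comm, mul_assoc, ← pow_add, add_comm k]

section

variable {R : Type*} [CommSemiring R]

lemma sum_choose_mul_choose_mul_pow {m k : ℕ} (hk : k ≤ m) (u : R) :
    ∑ j ∈ range (m + 1), (m.choose j * j.choose k : R) * u ^ j
      = m.choose k * u ^ k * (1 + u) ^ (m - k) := by
  obtain ⟨l, rfl⟩ := Nat.exists_eq_add_of_le hk
  rw [show k + l + 1 = k + (l + 1) by ring, sum_range_add, sum_eq_zero fun j hj => by
    simp [Nat.choose_eq_zero_of_lt (mem_range.mp hj)], zero_add, Nat.add_sub_cancel_left,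
    add_comm 1 u, add_pow, mul_sum]
  refine sum_congr rfl fun i _ => ?_
  have key := Nat.choose_mul (n := k + l) (k := k + i) (s := k) (Nat.le_add_right k i)
  rw [Nat.add_sub_cancel_left, Nat.add_sub_cancel_left] at key
  rw [← Nat.cast_mul, key, Nat.cast_mul, pow_add, one_pow, mul_one]
  ring

lemma sum_choose_mul_add_choose_mul_pow (m : ℕ) (u : R) :
    ∑ j ∈ range (m + 1), (m.choose j * (m + j).choose j : R) * u ^ j
      = ∑ k ∈ range (m + 1), (m.choose k : R) ^ 2 * u ^ (m - k) * (1 + u) ^ k := by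
  have vandermonde (j : ℕ) :
      (m + j).choose j = ∑ k ∈ range (m + 1), m.choose k * j.choose (m - k) := by
    rw [← Nat.choose_symm_add, Nat.add_choose_eq, Nat.sum_antidiagonal_eq_sum_range_succ_mk]
  simp_rw [vandermonde, Nat.cast_sum, mul_sum, sum_mul]
  rw [sum_comm]
  refine sum_congr rfl fun k hk => ?_
  have hkm : k ≤ m := Nat.lt_succ_iff.mp (mem_range.mp hk)
  calc ∑ j ∈ range (m + 1), (m.choose j * (m.choose k * j.choose (m - k) : ℕ) : R) * u ^ j
      = m.choose k * ∑ j ∈ range (m + 1), (m.choose j * j.choose (m - k) : R) * u ^ j := by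
        rw [mul_sum]
        refine sum_congr rfl fun j _ => ?_
        push_cast
        ring
    _ = (m.choose k : R) ^ 2 * u ^ (m - k) * (1 + u) ^ k := by
        rw [sum_choose_mul_choose_mul_pow (Nat.sub_le m k), Nat.choose_symm hkm,
          Nat.sub_sub_self hkm]
        ring

end

lemma legendreP_one_add_two_mul (m : ℕ) (u : ℂ) :
    legendreP m (1 + 2 * u) =
      ∑ j ∈ range (m + 1), (m.choose j * (m + j).choose j : ℂ) * u ^ j := by
  rw [sum_choose_mul_add_choose_mul_pow, legendreP, mul_sum]
  refine sum_congr rfl fun k hk => ?_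
  have two_pow : (2 : ℂ) ^ m = 2 ^ (m - k) * 2 ^ k := by
    rw [← pow_add, Nat.sub_add_cancel (Nat.lt_succ_iff.mp (mem_range.mp hk))]
  rw [show 1 + 2 * u - 1 = 2 * u by ring, show 1 + 2 * u + 1 = 2 * (1 + u) by ring, mul_pow,
    mul_pow, two_pow]
  field_simp

lemma hasSum_batemanEval_mul_pow (m : ℕ) {t : ℂ} (ht : ‖t‖ < 1) :
    HasSum (fun n => batemanEval m n * t ^ n)
      (∑ k ∈ range (m + 1),
        (m.choose k * (m + k).choose k : ℂ) * (t ^ k / (1 - t) ^ (k + 1))) := by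
  simp_rw [batemanEval_eq_sum_choose, sum_mul]
  refine hasSum_sum fun k _ => ?_
  simpa only [mul_assoc] using
    (hasSum_choose_mul_pow k ht).mul_left (m.choose k * (m + k).choose k : ℂ)

/-- `∑_{n=0}^∞ B_m(−2n−1) t^n = (1/(1−t)) P_m((1+t)/(1−t))`. -/
theorem bateman_eval_genfun_legendre (m : ℕ) (t : ℂ) (ht : ‖t‖ < 1) :
    ∑' n : ℕ, batemanEval m n * t ^ n =
      (1 / (1 - t)) * legendreP m ((1 + t) / (1 - t)) := by
  have hs : 1 - t ≠ 0 := fun h => by simp [← sub_eq_zero.mp h] at ht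
  rw [(hasSum_batemanEval_mul_pow m ht).tsum_eq,
    show (1 + t) / (1 - t) = 1 + 2 * (t / (1 - t)) by field_simp; ring,
    legendreP_one_add_two_mul, mul_sum]
  refine sum_congr rfl fun k _ => ?_
  rw [div_pow]
  field_simp
  ring
end
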